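/- Let r ∈ ℕ, r ≥ 2, R = rI on ℝ^ν, and L ⊂ ℝ^ν finite with 0 ∈ L; let ρ_l(t) = (t−l)/r. Then the convex hull of the attractor X (the unique compact set with X = ⋃_{l∈L} ρ_l(X)) equals the simplex generated by 0 and the points y_l = −l/(r−1) for l ∈ L \ {0}, i.e., conv(X) = { Σ_{l≠0} s_l y_l : s_l ≥ 0, Σ s_l ≤ 1 }. -/

import Mathlib

/-!
Each map `ρ_l t = r⁻¹ • (t - l)` is the homothety with ratio `r⁻¹` centred at
`y_l = -(r - 1)⁻¹ • l`. A homothety with ratio in `[0, 1]` maps every convex set containing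
its centre into itself, so the simplex `K = conv {y_l}` (note `y_0 = 0`) is invariant under
all the `ρ_l`. Since they are contractions, each point of `X = ⋃ ρ_l(X)` lies within
`const · r⁻ⁿ` of `K` for every `n`, whence `X ⊆ K`. Conversely `y_l` is the fixed point of
`ρ_l`, hence a limit of iterates of `ρ_l` inside the closed set `X`, so `K ⊆ conv X`.
-/

open Set Filter Topology Function AffineMap

theorem Function.IsFixedPt.mem_of_contractingWith {α : Type*} [MetricSpace α] {K : NNReal}
    {f : α → α} {s : Set α} {x : α} (hf : ContractingWith K f) (hx : IsFixedPt f x)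
    (hs : IsClosed s) (hne : s.Nonempty) (hfs : MapsTo f s s) : x ∈ s := by
  obtain ⟨x₀, hx₀⟩ := hne
  have hK : Tendsto (fun n => (K : ℝ) ^ n * dist x₀ x) atTop (𝓝 0) := by
    simpa using (tendsto_pow_atTop_nhds_zero_of_lt_one K.coe_nonneg hf.1).mul_const (dist x₀ x)
  have hdist : Tendsto (fun n => dist (f^[n] x₀) x) atTop (𝓝 0) := by
    refine squeeze_zero (fun _ => dist_nonneg) (fun n => ?_) hK
    simpa [(hx.iterate n).eq] using (hf.2.iterate n).dist_le_mul x₀ x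
  exact hs.mem_of_tendsto (tendsto_iff_dist_tendsto_zero.2 hdist)
    (Eventually.of_forall fun n => hfs.iterate n hx₀)

theorem subset_of_subset_biUnion_image_of_lipschitzWith {α ι : Type*} [PseudoMetricSpace α]
    {K : NNReal} {f : ι → α → α} {I : Set ι} {X C : Set α} (hK : K < 1)
    (hf : ∀ i ∈ I, LipschitzWith K (f i)) (hC : IsClosed C)
    (hCne : C.Nonempty) (hfC : ∀ i ∈ I, MapsTo (f i) C C) (hX : Bornology.IsBounded X)
    (hXf : X ⊆ ⋃ i ∈ I, f i '' X) : X ⊆ C := by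
  obtain ⟨c, hc⟩ := hCne
  obtain ⟨M, hM⟩ := hX.subset_closedBall c
  have hclose : ∀ n, ∀ x ∈ X, ∃ p ∈ C, dist x p ≤ K ^ n * M := by
    intro n
    induction n with
    | zero => exact fun x hx => ⟨c, hc, by simpa using hM hx⟩
    | succ n ih =>
      intro x hx
      obtain ⟨i, hi, x', hx', rfl⟩ : ∃ i ∈ I, ∃ x' ∈ X, f i x' = x := by simpa using hXf hx
      obtain ⟨p, hp, hxp⟩ := ih x' hx'
      refine ⟨f i p, hfC i hi hp, ?_⟩
      calc dist (f i x') (f i p) ≤ K * dist x' p := (hf i hi).dist_le_mul x' p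
        _ ≤ K * (K ^ n * M) := by gcongr
        _ = K ^ (n + 1) * M := by ring
  have hlim : Tendsto (fun n => (K : ℝ) ^ n * M) atTop (𝓝 0) := by
    simpa using (tendsto_pow_atTop_nhds_zero_of_lt_one K.coe_nonneg hK).mul_const M
  intro x hx
  rw [← hC.closure_eq, Metric.mem_closure_iff_infDist_zero ⟨c, hc⟩]
  refine le_antisymm (ge_of_tendsto' hlim fun n => ?_) Metric.infDist_nonneg
  obtain ⟨p, hp, hxp⟩ := hclose n x hx
  exact (Metric.infDist_le_dist_of_mem hp).trans hxp

theorem lipschitzWith_homothety {𝕜 E : Type*} [NormedField 𝕜] [SeminormedAddCommGroup E]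
    [NormedSpace 𝕜 E] (p : E) (c : 𝕜) : LipschitzWith ‖c‖₊ (homothety p c) :=
  LipschitzWith.of_dist_le_mul fun x y => by
    simp [homothety_apply, dist_eq_norm, ← smul_sub, norm_smul]

theorem Convex.mapsTo_homothety {𝕜 E : Type*} [Field 𝕜] [LinearOrder 𝕜] [IsStrictOrderedRing 𝕜]
    [AddCommGroup E] [Module 𝕜 E] {s : Set E} {p : E} {c : 𝕜} (hs : Convex 𝕜 s) (hp : p ∈ s)
    (hc : c ∈ Icc 0 1) : MapsTo (homothety p c) s s := fun x hx => by
  rw [homothety_eq_lineMap]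
  exact hs.lineMap_mem hp hx hc

theorem inv_smul_sub_eq_homothety {𝕜 E : Type*} [Field 𝕜] [AddCommGroup E] [Module 𝕜 E] {r : 𝕜}
    (hr₀ : r ≠ 0) (hr₁ : r ≠ 1) (l : E) :
    (fun t => r⁻¹ • (t - l)) = homothety (-(r - 1)⁻¹ • l) r⁻¹ := by
  have hcoef : r⁻¹ * (r - 1)⁻¹ - (r - 1)⁻¹ = -r⁻¹ := by
    field_simp [sub_ne_zero.2 hr₁]
    ring
  ext t
  simp only [homothety_apply, vsub_eq_sub, vadd_eq_add]
  linear_combination (norm := module) -hcoef • l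

section Simplex

variable {𝕜 E ι : Type*} [Field 𝕜] [LinearOrder 𝕜] [IsStrictOrderedRing 𝕜] [AddCommGroup E]
  [Module 𝕜 E]

theorem convex_setOf_sum_smul_of_sum_le_one (L : Finset ι) (i₀ : ι) (v : ι → E) :
    Convex 𝕜 {y : E | ∃ s : ι → 𝕜, (∀ i, 0 ≤ s i) ∧ s i₀ = 0 ∧ ∑ i ∈ L, s i ≤ 1 ∧
      y = ∑ i ∈ L, s i • v i} := by
  rintro _ ⟨s, hs, hs₀, hsL, rfl⟩ _ ⟨t, ht, ht₀, htL, rfl⟩ a b ha hb hab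
  refine ⟨a • s + b • t, fun i => add_nonneg (mul_nonneg ha (hs i)) (mul_nonneg hb (ht i)),
    by simp [hs₀, ht₀], ?_, ?_⟩
  · simp only [Pi.add_apply, Pi.smul_apply, smul_eq_mul, Finset.sum_add_distrib, ← Finset.mul_sum]
    calc a * ∑ i ∈ L, s i + b * ∑ i ∈ L, t i ≤ a * 1 + b * 1 := by gcongr
      _ = 1 := by rw [mul_one, mul_one, hab]
  · simp only [Pi.add_apply, Pi.smul_apply, smul_eq_mul, add_smul, mul_smul,
      Finset.sum_add_distrib, Finset.smul_sum]

theorem convexHull_image_eq_setOf_sum_smul {L : Finset ι} {i₀ : ι} {v : ι → E} (hi₀ : i₀ ∈ L)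
    (hv : v i₀ = 0) :
    convexHull 𝕜 (v '' L) = {y : E | ∃ s : ι → 𝕜, (∀ i, 0 ≤ s i) ∧ s i₀ = 0 ∧
      ∑ i ∈ L, s i ≤ 1 ∧ y = ∑ i ∈ L, s i • v i} := by
  classical
  refine subset_antisymm (convexHull_min ?_ (convex_setOf_sum_smul_of_sum_le_one L i₀ v)) ?_
  · rintro _ ⟨i, hi : i ∈ L, rfl⟩
    by_cases h : i = i₀
    · exact ⟨0, fun _ => le_rfl, rfl, by simp, by simp [h, hv]⟩
    · refine ⟨Pi.single i 1, fun j => (Pi.single_nonneg.2 zero_le_one : (0 : ι → 𝕜) ≤ _) j,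
         Pi.single_eq_of_ne' h _, ?_, ?_⟩
      · simp [Finset.sum_pi_single', hi]
      · simp [Pi.single_apply, hi]
  · rintro _ ⟨s, hs, hs₀, hsL, rfl⟩
    -- the missing mass `1 - ∑ s` is put on `v i₀ = 0`
    set w := s + Pi.single i₀ (1 - ∑ i ∈ L, s i)
    have hw : ∀ i, 0 ≤ w i := fun i =>
      add_nonneg (hs i) ((Pi.single_nonneg.2 (sub_nonneg.2 hsL) : (0 : ι → 𝕜) ≤ _) i)
    have hw₁ : ∑ i ∈ L, w i = 1 := by simp [w, Finset.sum_add_distrib, Finset.sum_pi_single', hi₀]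
    have hws : ∑ i ∈ L, w i • v i = ∑ i ∈ L, s i • v i := by
      simp [w, add_smul, Finset.sum_add_distrib, Pi.single_apply, hi₀, hv]
    rw [← hws]
    exact (convex_convexHull 𝕜 _).sum_mem (fun i _ => hw i) hw₁
      fun i hi => subset_convexHull 𝕜 _ (mem_image_of_mem v hi)

end Simplex

/-- The normalization `s 0 = 0` encodes that the sum runs over `L \ {0}`. -/
theorem convexHull_attractor_eq_simplex {ν : ℕ} (r : ℕ) (hr : 2 ≤ r)
    (L : Finset (Fin ν → ℝ)) (h0L : (0 : Fin ν → ℝ) ∈ L)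
    (X : Set (Fin ν → ℝ)) (hXc : IsCompact X) (hXne : X.Nonempty)
    (hX : X = ⋃ l ∈ L, (fun t => ((r : ℝ))⁻¹ • (t - l)) '' X) :
    convexHull ℝ X =
      {y : Fin ν → ℝ | ∃ s : (Fin ν → ℝ) → ℝ,
        (∀ l, 0 ≤ s l) ∧ s 0 = 0 ∧ (∑ l ∈ L, s l) ≤ 1 ∧
        y = ∑ l ∈ L, s l • ((-(((r : ℝ) - 1)⁻¹)) • l)} := by
  set y : (Fin ν → ℝ) → (Fin ν → ℝ) := fun l => (-(((r : ℝ) - 1)⁻¹)) • l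
  have hr' : (2 : ℝ) ≤ r := by exact_mod_cast hr
  have hc : (r : ℝ)⁻¹ ∈ Icc 0 1 := ⟨by positivity, inv_le_one_of_one_le₀ (by linarith)⟩
  have hK : ‖(r : ℝ)⁻¹‖₊ < 1 := by
    rw [← NNReal.coe_lt_one, coe_nnnorm, Real.norm_of_nonneg hc.1]
    exact inv_lt_one_of_one_lt₀ (by linarith)
  rw [← convexHull_image_eq_setOf_sum_smul (v := y) h0L (smul_zero _)]
  simp only [inv_smul_sub_eq_homothety (r := (r : ℝ)) (by positivity) (by linarith)] at hX
  have hρX : ∀ l ∈ L, MapsTo (homothety (y l) (r : ℝ)⁻¹) X X := fun l hl x hx => by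
    rw [hX]; exact mem_biUnion hl (mem_image_of_mem _ hx)
  have hy : ∀ l ∈ L, y l ∈ convexHull ℝ (y '' L) := fun l hl =>
    subset_convexHull ℝ _ (mem_image_of_mem y hl)
  refine subset_antisymm (convexHull_min ?_ (convex_convexHull ℝ _)) (convexHull_mono ?_)
  · exact subset_of_subset_biUnion_image_of_lipschitzWith hK
      (fun l _ => lipschitzWith_homothety (y l) _)
      ((L.finite_toSet.image y).isCompact_convexHull ℝ).isClosed
      ⟨y 0, hy 0 h0L⟩ (fun l hl => (convex_convexHull ℝ _).mapsTo_homothety (hy l hl) hc)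
      hXc.isBounded hX.subset
  · rintro _ ⟨l, hl, rfl⟩
    exact IsFixedPt.mem_of_contractingWith ⟨hK, lipschitzWith_homothety _ _⟩
      (homothety_apply_same _ _) hXc.isClosed hXne (hρX l hl)
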